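/- arXiv:1811.07373 — 4 statements merged into one kernel-verified Lean document; each statement's English description precedes it below -/
import Mathlib

section
/- Every chain of class T_0 is obtained from [4] by a finite sequence of the two operations [b_1,…,b_r] ↦ [2, b_1, …, b_{r−1}, b_r+1] and [b_1,…,b_r] ↦ [b_1+1, b_2, …, b_r, 2]. -/
/-- Hirzebruch–Jung continued fraction of a list: `hj [b₁,…,bᵣ] = b₁ - 1/hj [b₂,…,bᵣ]`. -/
def hj : List ℚ → ℚ
  | [] => 0
  | [b] => b
  | b :: l => b - 1 / hj l


/-- A chain of integers ≥ 2 is of class T₀ if its HJ continued fraction equals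
`n²/(na-1)` for some coprime integers `n > a ≥ 1`. -/
def IsClassT0 (l : List ℤ) : Prop :=
  (∀ b ∈ l, 2 ≤ b) ∧ ∃ n a : ℤ, 1 ≤ a ∧ a < n ∧ Int.gcd n a = 1 ∧
    hj (l.map (fun b => (b : ℚ))) = (n ^ 2 : ℚ) / (n * a - 1)


/-- Chains of class T₀ generated from [4] by the two KSB operations. -/
inductive GenT0 : List ℤ → Prop
  | base : GenT0 [4]
  | left (l : List ℤ) (h : l ≠ []) : GenT0 l →
      GenT0 (2 :: (l.dropLast ++ [l.getLast h + 1]))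
  | right (l : List ℤ) (h : l ≠ []) : GenT0 l →
      GenT0 ((l.head h + 1) :: (l.tail ++ [2]))

/-! The chain `[b₁,…,bᵣ]` is encoded by its continuant matrix `∏ !![bᵢ, -1; 1, 0]`, of determinant
`1`, whose first column `(p, q)` gives `[b₁,…,bᵣ] = p / q`; reversing the chain transposes the
matrix up to signs. For a T₀ chain with data `(n, a)` coprimality forces `(p, q) = (n², na - 1)`,
and then the bounds satisfied by the reversed chain pin down the second column: the matrix is
`t0Matrix n a`, and that of the reversed chain is `t0Matrix n (n - a)`.

The first operation multiplies the matrix by `!![2, -1; 1, 0]` on the left and by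
`!![1, 0; -1, 1]` on the right, which turns `t0Matrix m c` into `t0Matrix (2m - c) m`.
Conversely, if `n < 2a` and the chain is not `[4]`, comparing `p / q` with the first entry shows
that the chain starts with `2` and (applied to the reversed chain) ends with an entry `≥ 3`, so it
arises by the first operation from a chain with data `(a, 2a - n)`. The case `n > 2a` is its
mirror image, and `n = 2a` is excluded by coprimality; induct on `n`. -/

open Matrix

def hjStep (b : ℤ) : Matrix (Fin 2) (Fin 2) ℤ := !![b, -1; 1, 0]

def hjMatrix (l : List ℤ) : Matrix (Fin 2) (Fin 2) ℤ := (l.map hjStep).prod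

def t0Matrix (n a : ℤ) : Matrix (Fin 2) (Fin 2) ℤ :=
  !![n ^ 2, 1 - n * (n - a); n * a - 1, 1 - a * (n - a)]

@[simp] lemma t0Matrix_apply_zero_zero (n a : ℤ) : t0Matrix n a 0 0 = n ^ 2 := rfl

@[simp] lemma t0Matrix_apply_zero_one (n a : ℤ) : t0Matrix n a 0 1 = 1 - n * (n - a) := rfl

@[simp] lemma t0Matrix_apply_one_zero (n a : ℤ) : t0Matrix n a 1 0 = n * a - 1 := rfl

@[simp] lemma hjMatrix_nil : hjMatrix [] = 1 := rfl

lemma hjMatrix_cons (b : ℤ) (l : List ℤ) : hjMatrix (b :: l) = hjStep b * hjMatrix l := by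
  simp [hjMatrix]

lemma hjMatrix_append (l₁ l₂ : List ℤ) : hjMatrix (l₁ ++ l₂) = hjMatrix l₁ * hjMatrix l₂ := by
  simp [hjMatrix]

lemma hjMatrix_cons_apply_zero_zero (b : ℤ) (l : List ℤ) :
    hjMatrix (b :: l) 0 0 = b * hjMatrix l 0 0 - hjMatrix l 1 0 := by
  simp [hjMatrix_cons, hjStep, mul_apply, Fin.sum_univ_two, sub_eq_add_neg]

lemma hjMatrix_cons_apply_one_zero (b : ℤ) (l : List ℤ) :
    hjMatrix (b :: l) 1 0 = hjMatrix l 0 0 := by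
  simp [hjMatrix_cons, hjStep, mul_apply, Fin.sum_univ_two]

lemma det_hjMatrix (l : List ℤ) : (hjMatrix l).det = 1 := by
  induction l with
  | nil => simp
  | cons b l ih => rw [hjMatrix_cons, det_mul, ih]; simp [hjStep]

lemma isCoprime_hjMatrix (l : List ℤ) : IsCoprime (hjMatrix l 0 0) (hjMatrix l 1 0) := by
  have hdet := det_hjMatrix l
  rw [det_fin_two] at hdet
  exact ⟨hjMatrix l 1 1, -hjMatrix l 0 1, by linear_combination hdet⟩

lemma hjMatrix_reverse (l : List ℤ) :
    hjMatrix l.reverse =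
      !![hjMatrix l 0 0, -hjMatrix l 1 0; -hjMatrix l 0 1, hjMatrix l 1 1] := by
  induction l with
  | nil => ext i j; fin_cases i <;> fin_cases j <;> simp
  | cons b l ih =>
    rw [List.reverse_cons, hjMatrix_append, ih, hjMatrix_cons]
    ext i j
    fin_cases i <;> fin_cases j <;> simp [hjMatrix, hjStep, mul_apply, Fin.sum_univ_two] <;> ring

lemma hjMatrix_bounds {l : List ℤ} (hl : ∀ b ∈ l, 2 ≤ b) :
    0 ≤ hjMatrix l 1 0 ∧ hjMatrix l 1 0 < hjMatrix l 0 0 := by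
  induction l with
  | nil => simp
  | cons b l ih =>
    obtain ⟨hq, hqp⟩ := ih fun x hx => hl x (List.mem_cons_of_mem _ hx)
    have hb : 2 ≤ b := hl b List.mem_cons_self
    rw [hjMatrix_cons_apply_zero_zero, hjMatrix_cons_apply_one_zero]
    constructor <;> nlinarith

lemma hjMatrix_apply_one_zero_pos {l : List ℤ} (hl : ∀ b ∈ l, 2 ≤ b) (hne : l ≠ []) :
    0 < hjMatrix l 1 0 := by
  obtain ⟨b, t, rfl⟩ := List.exists_cons_of_ne_nil hne
  rw [hjMatrix_cons_apply_one_zero]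
  have := hjMatrix_bounds fun x hx => hl x (List.mem_cons_of_mem b hx)
  omega

lemma hj_eq_div {l : List ℤ} (hl : ∀ b ∈ l, 2 ≤ b) :
    hj (l.map (↑)) = (hjMatrix l 0 0 : ℚ) / hjMatrix l 1 0 := by
  induction l with
  | nil => simp [hj] -- both sides are `0`, as `1 / 0 = 0`
  | cons b t ih =>
    rcases t with _ | ⟨c, t⟩
    · simp [hj, hjMatrix_cons_apply_zero_zero, hjMatrix_cons_apply_one_zero]
    · have ht : ∀ x ∈ c :: t, 2 ≤ x := fun x hx => hl x (List.mem_cons_of_mem _ hx)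
      have hq := hjMatrix_apply_one_zero_pos ht (List.cons_ne_nil c t)
      have hp := (hjMatrix_bounds ht).2
      have hj_cons : hj ((b :: c :: t).map (↑)) = b - 1 / hj ((c :: t).map (↑)) := rfl
      rw [hj_cons, ih ht, hjMatrix_cons_apply_zero_zero b, hjMatrix_cons_apply_one_zero b]
      have : (hjMatrix (c :: t) 0 0 : ℚ) ≠ 0 := by exact_mod_cast (hq.trans hp).ne'
      have : (hjMatrix (c :: t) 1 0 : ℚ) ≠ 0 := by exact_mod_cast hq.ne'
      push_cast
      field_simp

lemma eq_of_det_eq_one_of_col_zero_eq {A B : Matrix (Fin 2) (Fin 2) ℤ}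
    (hA : A.det = 1) (hB : B.det = 1) (h00 : A 0 0 = B 0 0) (h10 : A 1 0 = B 1 0)
    (hA01 : 0 ≤ -A 0 1 ∧ -A 0 1 < A 0 0) (hB01 : 0 ≤ -B 0 1 ∧ -B 0 1 < A 0 0) : A = B := by
  rw [det_fin_two] at hA hB
  have hcop : IsCoprime (A 0 0) (A 1 0) := ⟨A 1 1, -A 0 1, by linear_combination hA⟩
  have hcross : A 0 0 * (A 1 1 - B 1 1) = A 1 0 * (A 0 1 - B 0 1) := by
    linear_combination hA - hB - B 1 1 * h00 + B 0 1 * h10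
  have h01 : A 0 1 = B 0 1 := by
    have hdvd : A 0 0 ∣ A 0 1 - B 0 1 := hcop.dvd_of_dvd_mul_left ⟨_, hcross.symm⟩
    have := Int.eq_zero_of_abs_lt_dvd hdvd (by rw [abs_lt]; constructor <;> linarith)
    linarith
  have h11 : A 1 1 = B 1 1 := by
    rw [h01, sub_self, mul_zero, mul_eq_zero] at hcross
    exact sub_eq_zero.mp (hcross.resolve_left (by linarith))
  ext i j
  fin_cases i <;> fin_cases j <;> assumption

lemma det_t0Matrix (n a : ℤ) : (t0Matrix n a).det = 1 := by
  rw [t0Matrix, det_fin_two_of]; ring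

lemma hjMatrix_eq_t0Matrix_of_hj_eq {l : List ℤ} {n a : ℤ} (hl : ∀ b ∈ l, 2 ≤ b) (ha : 1 ≤ a)
    (han : a < n) (hv : hj (l.map (fun b => (b : ℚ))) = (n ^ 2 : ℚ) / (n * a - 1)) :
    hjMatrix l = t0Matrix n a := by
  -- `l.map (fun b => (b : ℚ))` elaborates as a monadic lift of `l`, not as `l.map Int.cast`.
  simp only [List.pure_def, List.bind_eq_flatMap, ← List.map_eq_flatMap, List.map_id_fun', id_eq]
    at hv
  have hn : 0 < n := by omega
  have hq : 0 < n * a - 1 := by nlinarith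
  have hne : l ≠ [] := by
    rintro rfl
    have : (0 : ℚ) < (n ^ 2 : ℚ) / (n * a - 1) := by
      apply div_pos (by positivity); exact_mod_cast hq
    simp [hj] at hv; linarith
  have hcop : IsCoprime (n ^ 2) (n * a - 1) := IsCoprime.pow_left ⟨a, -1, by ring⟩
  have hv' : (hjMatrix l 0 0 : ℚ) / hjMatrix l 1 0 = ((n ^ 2 : ℤ) : ℚ) / ((n * a - 1 : ℤ) : ℚ) := by
    rw [← hj_eq_div hl, hv]; push_cast; rfl
  obtain ⟨hp, hq'⟩ := Rat.div_int_inj (hjMatrix_apply_one_zero_pos hl hne) hq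
    (Int.isCoprime_iff_gcd_eq_one.mp (isCoprime_hjMatrix l))
    (Int.isCoprime_iff_gcd_eq_one.mp hcop) hv'
  have hrev := hjMatrix_bounds fun b hb => hl b (List.mem_reverse.mp hb)
  simp only [hjMatrix_reverse, of_apply, cons_val', cons_val_zero, cons_val_one, empty_val',
    cons_val_fin_one] at hrev
  refine eq_of_det_eq_one_of_col_zero_eq (det_hjMatrix l) (det_t0Matrix n a) hp hq' hrev ?_
  rw [t0Matrix_apply_zero_one, hp]
  constructor <;> nlinarith

lemma hjMatrix_cons_bounds {b : ℤ} {t : List ℤ} (ht : ∀ x ∈ t, 2 ≤ x) :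
    (b - 1) * hjMatrix (b :: t) 1 0 < hjMatrix (b :: t) 0 0 ∧
      hjMatrix (b :: t) 0 0 ≤ b * hjMatrix (b :: t) 1 0 := by
  have := hjMatrix_bounds ht
  rw [hjMatrix_cons_apply_zero_zero, hjMatrix_cons_apply_one_zero]
  constructor <;> linarith

lemma hjMatrix_reverse_eq_t0Matrix {l : List ℤ} {n a : ℤ} (hM : hjMatrix l = t0Matrix n a) :
    hjMatrix l.reverse = t0Matrix n (n - a) := by
  rw [hjMatrix_reverse, hM]
  ext i j
  fin_cases i <;> fin_cases j <;> simp [t0Matrix]; ring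

lemma head_eq_two {b : ℤ} {t : List ℤ} {n a : ℤ} (hb : 2 ≤ b) (ht : ∀ x ∈ t, 2 ≤ x)
    (hM : hjMatrix (b :: t) = t0Matrix n a) (hn : 3 ≤ n) (hna : n < 2 * a) : b = 2 := by
  have h := (hjMatrix_cons_bounds (b := b) ht).1
  rw [hM, t0Matrix_apply_zero_zero, t0Matrix_apply_one_zero] at h
  by_contra hb2
  have hq : 2 * (n * a - 1) ≤ (b - 1) * (n * a - 1) :=
    mul_le_mul_of_nonneg_right (by omega) (by nlinarith)
  nlinarith

lemma three_le_head {b : ℤ} {t : List ℤ} {n a : ℤ} (ht : ∀ x ∈ t, 2 ≤ x)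
    (hM : hjMatrix (b :: t) = t0Matrix n a) (ha : 1 ≤ a) (hna : 2 * a < n) : 3 ≤ b := by
  have h := (hjMatrix_cons_bounds (b := b) ht).2
  rw [hM, t0Matrix_apply_zero_zero, t0Matrix_apply_one_zero] at h
  by_contra hb3
  have hq : b * (n * a - 1) ≤ 2 * (n * a - 1) :=
    mul_le_mul_of_nonneg_right (by omega) (by nlinarith)
  nlinarith

lemma three_le_last {s : List ℤ} {d n a : ℤ} (hs : ∀ x ∈ s, 2 ≤ x)
    (hM : hjMatrix (s ++ [d]) = t0Matrix n a) (han : a < n) (hna : n < 2 * a) : 3 ≤ d := by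
  have hrev := hjMatrix_reverse_eq_t0Matrix hM
  rw [List.reverse_append, List.reverse_singleton, List.singleton_append] at hrev
  exact three_le_head (fun x hx => hs x (List.mem_reverse.mp hx)) hrev (by omega) (by omega)

lemma hjMatrix_two_cons_append (s : List ℤ) (e : ℤ) :
    hjMatrix (2 :: (s ++ [e + 1])) = hjStep 2 * hjMatrix (s ++ [e]) * !![1, 0; -1, 1] := by
  have hstep : hjStep (e + 1) = hjStep e * !![1, 0; -1, 1] := by
    ext i j; fin_cases i <;> fin_cases j <;> simp [hjStep]
  simp only [hjMatrix_cons, hjMatrix_append, hstep, Matrix.mul_assoc]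
  simp [hjMatrix]

lemma hjMatrix_eq_t0Matrix_of_two_cons {s : List ℤ} {e n a : ℤ}
    (hM : hjMatrix (2 :: (s ++ [e + 1])) = t0Matrix n a) :
    hjMatrix (s ++ [e]) = t0Matrix a (2 * a - n) := by
  have ht0 : t0Matrix n a = hjStep 2 * t0Matrix a (2 * a - n) * !![1, 0; -1, 1] := by
    ext i j
    fin_cases i <;> fin_cases j <;>
      simp only [t0Matrix, hjStep, mul_apply, Fin.sum_univ_two, of_apply, cons_val', cons_val_zero,
        cons_val_one, empty_val', cons_val_fin_one, Fin.zero_eta, Fin.mk_one] <;> ring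
  have unit_of_det {A : Matrix (Fin 2) (Fin 2) ℤ} (h : A.det = 1) : IsUnit A :=
    (isUnit_iff_isUnit_det A).mpr (h ▸ isUnit_one)
  rw [hjMatrix_two_cons_append, ht0] at hM
  exact (unit_of_det (by simp [hjStep])).mul_left_cancel
    ((unit_of_det (by simp)).mul_right_cancel hM)

namespace GenT0

lemma two_cons {s : List ℤ} {e : ℤ} (h : GenT0 (s ++ [e])) : GenT0 (2 :: (s ++ [e + 1])) := by
  simpa using left _ (by simp) h

lemma succ_cons {b : ℤ} {t : List ℤ} (h : GenT0 (b :: t)) : GenT0 ((b + 1) :: (t ++ [2])) :=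
  right _ (List.cons_ne_nil b t) h

lemma reverse {l : List ℤ} (h : GenT0 l) : GenT0 l.reverse := by
  induction h with
  | base => exact base
  | left l hne _ ih =>
    obtain ⟨s, d, rfl⟩ := (List.eq_nil_or_concat' l).resolve_left hne
    simpa using succ_cons (by simpa using ih)
  | right l hne _ ih =>
    obtain ⟨b, t, rfl⟩ := List.exists_cons_of_ne_nil hne
    simpa using two_cons (by simpa using ih)

end GenT0

lemma two_le_hjMatrix_apply_one_zero {b c : ℤ} {t : List ℤ} (h : ∀ x ∈ c :: t, 2 ≤ x) :
    2 ≤ hjMatrix (b :: c :: t) 1 0 := by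
  have := hjMatrix_bounds h
  have := hjMatrix_apply_one_zero_pos h (List.cons_ne_nil c t)
  rw [hjMatrix_cons_apply_one_zero]
  omega

lemma exists_eq_cons_append {l : List ℤ} (h : 2 ≤ hjMatrix l 1 0) :
    ∃ b s d, l = b :: (s ++ [d]) := by
  rcases l with _ | ⟨b, t⟩
  · simp at h
  rcases t.eq_nil_or_concat' with rfl | ⟨s, d, rfl⟩
  · simp [hjMatrix, hjStep] at h
  exact ⟨b, s, d, rfl⟩

lemma genT0_of_lt_two_mul {l : List ℤ} {n a : ℤ}
    (ih : ∀ m < n, ∀ (l : List ℤ) (c : ℤ), (∀ b ∈ l, 2 ≤ b) → 1 ≤ c → c < m → IsCoprime m c →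
      hjMatrix l = t0Matrix m c → GenT0 l)
    (hl : ∀ b ∈ l, 2 ≤ b) (ha : 1 ≤ a) (han : a < n) (hcop : IsCoprime n a)
    (hM : hjMatrix l = t0Matrix n a) (hn : 3 ≤ n) (hna : n < 2 * a) : GenT0 l := by
  have hq : 2 ≤ hjMatrix l 1 0 := by rw [hM, t0Matrix_apply_one_zero]; nlinarith
  obtain ⟨b, s, d, rfl⟩ := exists_eq_cons_append hq
  have hs : ∀ x ∈ s, 2 ≤ x := fun x hx => hl x (by simp [hx])
  have hb : b = 2 := head_eq_two (hl b (by simp)) (fun x hx => hl x (by simp [hx])) hM hn hna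
  have hd : 3 ≤ d :=
    three_le_last (s := b :: s) (fun x hx => hl x (by simp at hx ⊢; tauto)) hM han hna
  obtain ⟨e, rfl⟩ : ∃ e, d = e + 1 := ⟨d - 1, by ring⟩
  subst hb
  refine GenT0.two_cons (ih a han _ (2 * a - n) ?_ (by omega) (by omega) ?_
    (hjMatrix_eq_t0Matrix_of_two_cons hM))
  · simp only [List.mem_append, List.mem_singleton]
    rintro x (hx | rfl)
    exacts [hs x hx, by omega]
  · obtain ⟨u, v, huv⟩ := hcop
    exact ⟨v + 2 * u, -u, by linear_combination huv⟩

lemma genT0_of_hjMatrix_eq_t0Matrix {l : List ℤ} {n a : ℤ} (hl : ∀ b ∈ l, 2 ≤ b) (ha : 1 ≤ a)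
    (han : a < n) (hcop : IsCoprime n a) (hM : hjMatrix l = t0Matrix n a) : GenT0 l := by
  induction n using Int.strongRec (m := 0) generalizing l a with
  | lt n hn => omega
  | ge n _ ih =>
    have hq : hjMatrix l 1 0 = n * a - 1 := by rw [hM, t0Matrix_apply_one_zero]
    by_cases hn : 3 ≤ n
    · rcases lt_trichotomy n (2 * a) with hlt | heq | hgt
      · exact genT0_of_lt_two_mul ih hl ha han hcop hM hn hlt
      · have := hcop.isUnit_of_dvd' ⟨2, by rw [heq]; ring⟩ dvd_rfl
        rw [Int.isUnit_iff] at this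
        omega
      · have hcop' : IsCoprime n (n - a) := by
          obtain ⟨u, v, huv⟩ := hcop
          exact ⟨u + v, -v, by linear_combination huv⟩
        have hrev := genT0_of_lt_two_mul ih (fun b hb => hl b (List.mem_reverse.mp hb))
          (by omega) (by omega) hcop' (hjMatrix_reverse_eq_t0Matrix hM) hn (by omega)
        simpa using hrev.reverse
    · obtain rfl : n = 2 := by omega
      obtain rfl : a = 1 := by omega
      rcases l with _ | ⟨b, _ | ⟨c, t⟩⟩
      · simp at hq
      · have hb : b = 4 := by simpa [hjMatrix, hjStep] using congrFun (congrFun hM 0) 0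
        rw [hb]
        exact GenT0.base
      · have := two_le_hjMatrix_apply_one_zero (b := b) fun x hx => hl x (List.mem_cons_of_mem b hx)
        omega

/-- Every chain of class T₀ is obtained from [4] by a finite sequence of the
two operations [b₁,…,bᵣ] ↦ [2,b₁,…,b_{r-1},bᵣ+1] and
[b₁,…,bᵣ] ↦ [b₁+1,b₂,…,bᵣ,2]. -/
theorem stmt_3 (l : List ℤ) (h : IsClassT0 l) : GenT0 l := by
  obtain ⟨hl, n, a, ha, han, hgcd, hv⟩ := h
  exact genT0_of_hjMatrix_eq_t0Matrix hl ha han (Int.isCoprime_iff_gcd_eq_one.mpr hgcd)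
    (hjMatrix_eq_t0Matrix_of_hj_eq hl ha han hv)
end

section
/- If a chain [b_1,…,b_t] of class T_0 satisfies b_j = 2 for all j > i and b_i ≥ 3 with i ≥ 2, then b_1 = (t − i) + 2, and moreover [b_1 − (t−i), b_2, …, b_i] = [2, b_2, …, b_i] is again of class T_0 after replacing b_i by b_i (i.e., the chain [b_1−(t−i), b_2, …, b_i] is of class T_0). -/
/-!
Encode a chain by the product of the matrices `!![b, -1; 1, 0]`. Its first column holds the
numerator and denominator of the continued fraction, its second column those of the reversed
chain, and its determinant is `1`. For a chain of class T₀ with fraction `n² / (na - 1)` the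
determinant forces the reversed fraction to be `n² / (n(n - a) - 1)`, so the whole matrix is
determined by `(n, a)`. Appending `2` multiplies on the right by a unipotent matrix and adding `k`
to the first entry multiplies on the left by `!![1, k; 0, 1]`; stripping the `m` trailing `2`s and
subtracting `m` from the first entry therefore turns the matrix of `(n, a)` into that of
`(n - ma, a)`. For the shortened chain `[x, …, c]` with `c ≥ 3`, the inequality `2R < P` for the
tail forces `n < 2a`, and then `x = ⌈n² / (na - 1)⌉ = 2`.
-/

namespace Chain

/-- `mat [b₁, …, bᵣ] = !![P, -R; Q, -S]`, where `P`, `Q`, `R`, `S` are the continuants of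
`[b₁, …, bᵣ]`, `[b₂, …, bᵣ]`, `[b₁, …, bᵣ₋₁]` and `[b₂, …, bᵣ₋₁]`; thus `P / Q` is the continued
fraction of the chain and `P / R` that of the reversed chain. -/
def mat : List ℤ → Matrix (Fin 2) (Fin 2) ℤ
  | [] => 1
  | b :: l => !![b, -1; 1, 0] * mat l

def num (l : List ℤ) : ℤ := mat l 0 0

def den (l : List ℤ) : ℤ := mat l 1 0

def revDen (l : List ℤ) : ℤ := -mat l 0 1

def mid (l : List ℤ) : ℤ := -mat l 1 1

theorem mat_eq (l : List ℤ) : mat l = !![num l, -revDen l; den l, -mid l] := by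
  simpa [num, den, revDen, mid] using Matrix.eta_fin_two (mat l)

theorem mat_append (l l' : List ℤ) : mat (l ++ l') = mat l * mat l' := by
  induction l with
  | nil => simp [mat]
  | cons b l ih => simp [mat, ih]

theorem mat_replicate_two (m : ℕ) :
    mat (List.replicate m 2) = !![(m : ℤ) + 1, -m; m, 1 - m] := by
  induction m with
  | zero => simp [mat, Matrix.one_fin_two]
  | succ m ih =>
    rw [List.replicate_succ, mat, ih]
    ext i j; fin_cases i <;> fin_cases j <;> simp <;> ring

theorem mat_cons_add (b k : ℤ) (l : List ℤ) :
    mat ((b + k) :: l) = !![1, k; 0, 1] * mat (b :: l) := by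
  simp only [mat, ← Matrix.mul_assoc]
  congr 1
  ext i j; fin_cases i <;> fin_cases j <;> simp

@[simp] theorem num_nil : num [] = 1 := rfl
@[simp] theorem den_nil : den [] = 0 := rfl
@[simp] theorem revDen_nil : revDen [] = 0 := by simp [revDen, mat]
@[simp] theorem mid_nil : mid [] = -1 := by simp [mid, mat]

section cons

variable (b : ℤ) (l : List ℤ)

@[simp] theorem num_cons : num (b :: l) = b * num l - den l := by
  simp [num, den, mat, Matrix.mul_apply, Fin.sum_univ_two]; ring
@[simp] theorem den_cons : den (b :: l) = num l := by
  simp [num, den, mat, Matrix.mul_apply, Fin.sum_univ_two]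
@[simp] theorem revDen_cons : revDen (b :: l) = b * revDen l - mid l := by
  simp [revDen, mid, mat, Matrix.mul_apply, Fin.sum_univ_two]; ring
@[simp] theorem mid_cons : mid (b :: l) = revDen l := by
  simp [revDen, mid, mat, Matrix.mul_apply, Fin.sum_univ_two]

end cons

theorem revDen_mul_den_sub_num_mul_mid (l : List ℤ) :
    revDen l * den l - num l * mid l = 1 := by
  have h : (mat l).det = 1 := by
    induction l with
    | nil => simp [mat]
    | cons b l ih => rw [mat, Matrix.det_mul, ih, Matrix.det_fin_two_of]; ring
  rw [mat_eq, Matrix.det_fin_two_of] at h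
  linarith

theorem isCoprime_num_den (l : List ℤ) : IsCoprime (num l) (den l) :=
  ⟨-mid l, revDen l, by linear_combination revDen_mul_den_sub_num_mul_mid l⟩

section bounds

variable {l : List ℤ} (hl : ∀ b ∈ l, 2 ≤ b)
include hl

theorem bounds :
    0 ≤ revDen l ∧ mid l < revDen l ∧ mid l < den l ∧ den l < num l ∧
      den l - mid l ≤ num l - revDen l := by
  induction l with
  | nil => simp
  | cons b l ih =>
    have hb : 2 ≤ b := hl b (by simp)
    obtain ⟨h1, h2, h3, h4, h5⟩ := ih fun c hc => hl c (by simp [hc])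
    simp only [num_cons, den_cons, revDen_cons, mid_cons]
    refine ⟨by nlinarith, by nlinarith, by linarith, by nlinarith, by nlinarith⟩

theorem num_pos : 0 < num l := by
  obtain ⟨h1, h2, h3, h4, h5⟩ := bounds hl
  linarith

theorem bounds_of_ne_nil (hne : l ≠ []) :
    0 < den l ∧ den l < num l ∧ 0 < revDen l ∧ revDen l < num l := by
  obtain ⟨b, t, rfl⟩ := List.exists_cons_of_ne_nil hne
  obtain ⟨h1, h2, h3, h4, h5⟩ := bounds hl
  have ht := bounds fun c hc => hl c (List.mem_cons_of_mem b hc)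
  simp only [den_cons, mid_cons] at *
  refine ⟨?_, ?_, ?_, ?_⟩ <;> linarith

end bounds

theorem two_mul_revDen_lt_num {L : List ℤ} {c : ℤ} (hL : ∀ b ∈ L, 2 ≤ b) (hc : 3 ≤ c) :
    2 * revDen (L ++ [c]) < num (L ++ [c]) := by
  have h : mat (L ++ [c]) = !![c * num L - revDen L, -num L; c * den L - mid L, -den L] := by
    rw [mat_append, mat_eq L]
    ext i j; fin_cases i <;> fin_cases j <;> simp [mat, mul_comm, sub_eq_add_neg]
  have hnum : num (L ++ [c]) = c * num L - revDen L := by simp [num, h]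
  have hrev : revDen (L ++ [c]) = num L := by simp [revDen, h]
  obtain ⟨h1, h2, h3, h4, h5⟩ := bounds hL
  rw [hnum, hrev]
  nlinarith

theorem hj_eq_num_div_den {l : List ℤ} (hl : ∀ b ∈ l, 2 ≤ b) :
    hj (l.map ((↑) : ℤ → ℚ)) = num l / den l := by
  induction l with
  | nil => simp [hj]
  | cons b t ih =>
    rcases t with _ | ⟨c, t⟩
    · simp [hj]
    · have ht : ∀ x ∈ c :: t, 2 ≤ x := fun x hx => hl x (List.mem_cons_of_mem b hx)
      have hpos : (0 : ℚ) < num (c :: t) := by exact_mod_cast num_pos ht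
      rw [List.map_cons, hj.eq_3 _ _ (by simp), ih ht, num_cons b, den_cons b]
      field_simp
      push_cast
      ring

/-- `IsClassT0` is stated with `l.map (fun b => (b : ℚ))`, which elaborates by lifting `l` into
`List ℚ` through the list monad rather than as `l.map Int.cast`. -/
theorem map_coe_eq (l : List ℤ) : l.map (fun b => (b : ℚ)) = l.map ((↑) : ℤ → ℚ) := by
  simp [List.map_eq_flatMap]

/-- The continuant matrix of a chain with continued fraction `n² / (na - 1)`; the second column
says that the reversed chain has continued fraction `n² / (n(n - a) - 1)`. -/
def wahlMatrix (n a : ℤ) : Matrix (Fin 2) (Fin 2) ℤ :=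
  !![n ^ 2, -(n * (n - a) - 1); n * a - 1, -(n * a - a ^ 2 - 1)]

theorem isCoprime_sq_mul_sub_one {n a : ℤ} : IsCoprime (n ^ 2) (n * a - 1) :=
  IsCoprime.pow_left ⟨a, -1, by ring⟩

theorem IsClassT0.mat_eq_wahlMatrix {l : List ℤ} (h : IsClassT0 l) (hne : l ≠ []) :
    ∃ n a : ℤ, 1 ≤ a ∧ a < n ∧ IsCoprime n a ∧ mat l = wahlMatrix n a := by
  obtain ⟨hl, n, a, ha, han, hgcd, hhj⟩ := h
  obtain ⟨hden, -, hrev, hrev_lt⟩ := bounds_of_ne_nil hl hne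
  have hna : 0 < n * a - 1 := by nlinarith
  obtain ⟨hnum, hden⟩ : num l = n ^ 2 ∧ den l = n * a - 1 := by
    refine Rat.div_int_inj hden hna (Int.isCoprime_iff_gcd_eq_one.mp (isCoprime_num_den l))
      (Int.isCoprime_iff_gcd_eq_one.mp isCoprime_sq_mul_sub_one) ?_
    rw [← hj_eq_num_div_den hl, ← map_coe_eq, hhj]
    push_cast
    ring
  have hdet := revDen_mul_den_sub_num_mul_mid l
  rw [hnum, hden] at hdet
  -- `revDen l` and `n(n - a) - 1` are both inverses of `na - 1` modulo `n²` in `(0, n²)`.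
  have hrev' : revDen l = n * (n - a) - 1 := by
    have hdvd : n ^ 2 ∣ revDen l - (n * (n - a) - 1) :=
      isCoprime_sq_mul_sub_one.dvd_of_dvd_mul_right (show n ^ 2 ∣ _ * (n * a - 1) from
        ⟨mid l - (n * a - a ^ 2 - 1), by linear_combination hdet⟩)
    have := Int.eq_zero_of_abs_lt_dvd hdvd (abs_sub_lt_iff.mpr ⟨by nlinarith, by nlinarith⟩)
    linarith
  have hmid : mid l = n * a - a ^ 2 - 1 := by
    refine mul_left_cancel₀ (pow_ne_zero 2 (by omega : n ≠ 0)) ?_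
    linear_combination -hdet + (n * a - 1) * hrev'
  refine ⟨n, a, ha, han, Int.isCoprime_iff_gcd_eq_one.mpr hgcd, ?_⟩
  rw [mat_eq, hnum, hden, hrev', hmid, wahlMatrix]

theorem isClassT0_of_mat_eq_wahlMatrix {l : List ℤ} {n a : ℤ} (hl : ∀ b ∈ l, 2 ≤ b)
    (ha : 1 ≤ a) (han : a < n) (hco : IsCoprime n a) (h : mat l = wahlMatrix n a) :
    IsClassT0 l := by
  have hnum : num l = n ^ 2 := by simp [num, h, wahlMatrix]
  have hden : den l = n * a - 1 := by simp [den, h, wahlMatrix]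
  refine ⟨hl, n, a, ha, han, Int.isCoprime_iff_gcd_eq_one.mp hco, ?_⟩
  rw [map_coe_eq, hj_eq_num_div_den hl, hnum, hden]
  push_cast
  ring

theorem mat_cons_sub_eq_wahlMatrix {b : ℤ} {M : List ℤ} {n a : ℤ} (m : ℕ)
    (h : mat (b :: (M ++ List.replicate m 2)) = wahlMatrix n a) :
    mat ((b - m) :: M) = wahlMatrix (n - m * a) a := by
  have hsplit : mat (b :: (M ++ List.replicate m 2)) =
      !![1, (m : ℤ); 0, 1] * mat ((b - m) :: M) * !![(m : ℤ) + 1, -m; m, 1 - m] := by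
    rw [← List.cons_append, mat_append, mat_replicate_two, ← mat_cons_add, sub_add_cancel]
  have hU : !![1, -(m : ℤ); 0, 1] * !![1, (m : ℤ); 0, 1] = 1 := by
    ext i j; fin_cases i <;> fin_cases j <;> simp
  have hV : !![(m : ℤ) + 1, -m; m, 1 - m] * !![1 - (m : ℤ), m; -m, 1 + m] = 1 := by
    ext i j; fin_cases i <;> fin_cases j <;> simp <;> ring
  calc mat ((b - m) :: M)
      = !![1, -(m : ℤ); 0, 1] * mat (b :: (M ++ List.replicate m 2)) *
          !![1 - (m : ℤ), m; -m, 1 + m] := by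
        rw [hsplit, ← Matrix.mul_assoc, ← Matrix.mul_assoc, hU, Matrix.one_mul, Matrix.mul_assoc,
          hV, Matrix.mul_one]
    _ = wahlMatrix (n - m * a) a := by
        rw [h, wahlMatrix, wahlMatrix]
        ext i j; fin_cases i <;> fin_cases j <;> simp [Matrix.mul_apply, Fin.sum_univ_two] <;> ring

theorem head_eq_two_of_mat_eq_wahlMatrix {x c n a : ℤ} {L : List ℤ}
    (hL : ∀ b ∈ L, 2 ≤ b) (hc : 3 ≤ c) (ha : 1 ≤ a) (hco : IsCoprime n a)
    (h : mat (x :: (L ++ [c])) = wahlMatrix n a) : x = 2 ∧ a < n := by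
  have hM : ∀ b ∈ L ++ [c], 2 ≤ b := by
    simp only [List.mem_append, List.mem_singleton]
    rintro b (hb | rfl)
    exacts [hL b hb, by omega]
  obtain ⟨hQ, hQP, hR, -⟩ := bounds_of_ne_nil hM (by simp)
  have hRP := two_mul_revDen_lt_num hL hc
  have hnum : num (x :: (L ++ [c])) = n ^ 2 := by simp [num, h, wahlMatrix]
  have hP : den (x :: (L ++ [c])) = n * a - 1 := by simp [den, h, wahlMatrix]
  have hR' : mid (x :: (L ++ [c])) = n * a - a ^ 2 - 1 := by simp [mid, h, wahlMatrix]
  rw [num_cons] at hnum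
  rw [den_cons] at hP
  rw [mid_cons] at hR'
  have han : a < n := by nlinarith
  -- `2 * revDen < num` gives `n ≤ 2a`, and `n = 2a` would force `a = 1`, `n = 2`, `revDen = 0`.
  have hn2a : n ≤ 2 * a := by nlinarith
  have hn2a' : n ≠ 2 * a := by
    rintro rfl
    rcases Int.isUnit_iff.mp (hco.isUnit_of_dvd' (dvd_mul_left a 2) dvd_rfl) with rfl | rfl <;>
      omega
  refine ⟨?_, han⟩
  have hlow : num (L ++ [c]) < n ^ 2 := by nlinarith
  have hup : n ^ 2 ≤ 2 * num (L ++ [c]) := by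
    nlinarith [mul_le_mul_of_nonneg_left (by omega : n ≤ 2 * a - 1) (by omega : 0 ≤ n)]
  have hx1 : 1 < x := by nlinarith
  have hx3 : x < 3 := by nlinarith
  omega

end Chain

theorem List.eq_take_append_replicate {α : Type*} {t : List α} {k : ℕ} {x : α}
    (h : ∀ (j : ℕ) (hj : j < t.length), k ≤ j → t[j] = x) :
    t = t.take k ++ List.replicate (t.length - k) x := by
  conv_lhs => rw [← List.take_append_drop k t]
  congr 1
  refine List.eq_replicate_iff.mpr ⟨by simp, fun y hy => ?_⟩
  obtain ⟨j, hj, rfl⟩ := List.mem_iff_getElem.mp hy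
  rw [List.getElem_drop]
  exact h _ _ (by omega)

open Chain in
/-- If a chain [b₁,…,b_t] of class T₀ has b_{k+1} ≥ 3 (0-based index k ≥ 1)
and all later entries equal to 2, then b₁ = (t-1-k) + 2, and the chain
[b₁-(t-1-k), b₂, …, b_{k+1}] (i.e. [2, b₂, …, b_{k+1}]) is again of class T₀. -/
theorem stmt_5 (l : List ℤ) (hT0 : IsClassT0 l) (k : ℕ)
    (hk1 : 1 ≤ k) (hk2 : k < l.length)
    (hbi : 3 ≤ l[k]!) (h2 : ∀ j, k < j → j < l.length → l[j]! = 2) :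
    l[0]! = ((l.length - 1 - k : ℕ) : ℤ) + 2 ∧
      IsClassT0 ((l[0]! - ((l.length - 1 - k : ℕ) : ℤ)) :: (l.tail.take k)) := by
  obtain ⟨b, t, rfl⟩ := List.exists_cons_of_ne_nil (List.ne_nil_of_length_pos (l := l) (by omega))
  obtain ⟨i, rfl⟩ : ∃ i, k = i + 1 := ⟨k - 1, by omega⟩
  simp only [List.length_cons, List.getElem!_cons_zero, List.getElem!_cons_succ, List.tail_cons,
    add_tsub_cancel_right] at hk2 hbi h2 ⊢
  have hi : i < t.length := by omega
  rw [getElem!_pos t i hi] at hbi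
  set m := t.length - (i + 1)
  have hchain : ∀ x ∈ t, 2 ≤ x := fun x hx => hT0.1 x (List.mem_cons_of_mem b hx)
  have ht : t = t.take i ++ [t[i]] ++ List.replicate m 2 := by
    rw [← List.take_succ_eq_append_getElem hi]
    refine List.eq_take_append_replicate fun j hj hij => ?_
    have := h2 (j + 1) (by omega) (by omega)
    rwa [List.getElem!_cons_succ, getElem!_pos t j hj] at this
  obtain ⟨n, a, ha, -, hco, hW⟩ := hT0.mat_eq_wahlMatrix (List.cons_ne_nil b t)
  rw [ht] at hW
  have hW' := mat_cons_sub_eq_wahlMatrix m hW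
  have hco' : IsCoprime (n - m * a) a := IsCoprime.sub_mul_right_left_iff.mpr hco
  obtain ⟨hb, han⟩ := head_eq_two_of_mat_eq_wahlMatrix
    (fun x hx => hchain x (List.mem_of_mem_take hx)) hbi ha hco' hW'
  refine ⟨by omega, ?_⟩
  refine isClassT0_of_mat_eq_wahlMatrix ?_ ha han hco' ?_
  · simp only [List.forall_mem_cons, hb, le_refl, true_and]
    exact fun x hx => hchain x (List.mem_of_mem_take hx)
  · rwa [List.take_succ_eq_append_getElem hi]
end

section
/- Let [b_1,…,b_t] be a chain of class T_0 with b_i ≥ 3 and b_j = 2 for all j > i, where i ≥ 2, and let c ≥ b_1 be an integer. Then the linear chains b_1 − b_2 − ⋯ − b_t − 1 − c and b_1 − b_2 − ⋯ − b_{i−1} − (b_i − 1) − (c − b_1 + 1) determine the same cyclic quotient singularity; that is, successively blowing down (−1)-curves in the first chain yields the second. Numerically: the continued fraction obtained by the recursive blow-down rule (contract an entry equal to 1 and decrease each neighbor by 1) applied to (b_1,…,b_t,1,c) terminates in (b_1,…,b_{i−1}, b_i−1, c−b_1+1). -/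
/-- Blow-down move: delete an interior entry equal to 1 and decrease both neighbors by 1. -/
inductive Bdown : List ℤ → List ℤ → Prop
  | mk (L : List ℤ) (x y : ℤ) (R : List ℤ) :
      Bdown (L ++ [x, 1, y] ++ R) (L ++ [x - 1, y - 1] ++ R)

namespace Stmt6Aux

/-- First column of the HJ continuant matrix: numerator and denominator. -/
def cc : List ℤ → ℤ × ℤ
  | [] => (1, 0)
  | b :: l => (b * (cc l).1 - (cc l).2, (cc l).1)

/-- Second column data of the continuant matrix. -/
def dd : List ℤ → ℤ × ℤ
  | [] => (0, -1)
  | b :: l => (b * (dd l).1 - (dd l).2, (dd l).1)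

@[simp] lemma cc_nil : cc [] = (1, 0) := rfl
@[simp] lemma cc_cons (b : ℤ) (l : List ℤ) :
    cc (b :: l) = (b * (cc l).1 - (cc l).2, (cc l).1) := rfl
@[simp] lemma dd_nil : dd [] = (0, -1) := rfl
@[simp] lemma dd_cons (b : ℤ) (l : List ℤ) :
    dd (b :: l) = (b * (dd l).1 - (dd l).2, (dd l).1) := rfl

lemma concat_rule (l : List ℤ) (b : ℤ) :
    cc (l ++ [b]) = (b * (cc l).1 - (dd l).1, b * (cc l).2 - (dd l).2) ∧
    dd (l ++ [b]) = ((cc l).1, (cc l).2) := by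
  induction l with
  | nil =>
    simp only [List.nil_append, cc_cons, cc_nil, dd_cons, dd_nil, Prod.mk.injEq]
    refine ⟨⟨trivial, by ring⟩, ⟨by ring, trivial⟩⟩
  | cons a l ih =>
    simp only [List.cons_append, cc_cons, dd_cons, ih.1, ih.2, Prod.mk.injEq]
    exact ⟨⟨by ring, trivial⟩, trivial⟩

lemma reverse_rule (l : List ℤ) :
    (cc l.reverse).1 = (cc l).1 ∧ (cc l.reverse).2 = (dd l).1 ∧
    (dd l.reverse).1 = (cc l).2 ∧ (dd l.reverse).2 = (dd l).2 := by
  induction l with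
  | nil => simp
  | cons b l ih =>
    rw [List.reverse_cons]
    rcases concat_rule l.reverse b with ⟨h1, h2⟩
    rw [h1, h2]
    simp [ih.1, ih.2.1, ih.2.2.1, ih.2.2.2]

lemma det_rule (l : List ℤ) : (cc l).1 * (dd l).2 - (cc l).2 * (dd l).1 = -1 := by
  induction l with
  | nil => simp
  | cons b l ih => simp; nlinarith [ih]

lemma bounds (l : List ℤ) (h : ∀ b ∈ l, 2 ≤ b) :
    0 ≤ (cc l).2 ∧ (cc l).2 < (cc l).1 ∧ 0 ≤ (dd l).1 ∧ (dd l).2 < (dd l).1 ∧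
    1 ≤ (cc l).2 - (dd l).2 ∧ (cc l).2 - (dd l).2 ≤ (cc l).1 - (dd l).1 := by
  induction l with
  | nil => simp
  | cons b l ih =>
    have hb : 2 ≤ b := h b List.mem_cons_self
    obtain ⟨i1, i2, i3, i4, i5, i6⟩ := ih (fun x hx => h x (List.mem_cons_of_mem b hx))
    simp only [cc_cons, dd_cons]
    have m1 : 0 ≤ (b - 2) * (cc l).1 := mul_nonneg (by linarith) (by linarith)
    have m2 : 0 ≤ (b - 2) * (dd l).1 := mul_nonneg (by linarith) i3
    have m3 : 0 ≤ (b - 2) * ((cc l).1 - (dd l).1) := mul_nonneg (by linarith) (by linarith)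
    refine ⟨by linarith, by nlinarith, by nlinarith, by nlinarith, by linarith, by nlinarith⟩

lemma cp_pos (l : List ℤ) (h : ∀ b ∈ l, 2 ≤ b) : 1 ≤ (cc l).1 := by
  have := bounds l h; linarith [this.1, this.2.1]

lemma cp_ge_two (l : List ℤ) (h : ∀ b ∈ l, 2 ≤ b) (hne : l ≠ []) : 2 ≤ (cc l).1 := by
  match l with
  | b :: l =>
    have hb : 2 ≤ b := h b List.mem_cons_self
    have := bounds l (fun x hx => h x (List.mem_cons_of_mem b hx))
    simp only [cc_cons]
    nlinarith [this.1, this.2.1]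

lemma cq_pos (l : List ℤ) (h : ∀ b ∈ l, 2 ≤ b) (hne : l ≠ []) : 1 ≤ (cc l).2 := by
  match l with
  | b :: l =>
    have := cp_pos l (fun x hx => h x (List.mem_cons_of_mem b hx))
    simpa using this

lemma coprime (l : List ℤ) : IsCoprime (cc l).1 (cc l).2 := by
  induction l with
  | nil => simpa using isCoprime_one_left
  | cons b l ih =>
    simp only [cc_cons]
    have h1 : IsCoprime (-(cc l).2) (cc l).1 := ih.symm.neg_left
    have h2 := h1.add_mul_left_left b
    have : -(cc l).2 + (cc l).1 * b = b * (cc l).1 - (cc l).2 := by ring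
    rwa [this] at h2

lemma replicate_rule (j : ℕ) (s : List ℤ) :
    (cc (List.replicate j 2 ++ s)).1 = (cc s).1 + j * ((cc s).1 - (cc s).2) ∧
    (cc (List.replicate j 2 ++ s)).2 = (cc s).2 + j * ((cc s).1 - (cc s).2) := by
  induction j with
  | zero => simp
  | succ j ih =>
    rw [List.replicate_succ, List.cons_append]
    simp only [cc_cons, ih.1, ih.2]
    constructor <;> push_cast <;> ring

lemma hj_eq (l : List ℤ) (hne : l ≠ []) (h : ∀ b ∈ l, 2 ≤ b) :
    hj (l.map (fun b => (b : ℚ))) = ((cc l).1 : ℚ) / ((cc l).2 : ℚ) := by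
  induction l with
  | nil => simp at hne
  | cons b l ih =>
    match l with
    | [] => simp [hj]
    | c :: l' =>
      have h' : ∀ x ∈ c :: l', 2 ≤ x := fun x hx => h x (List.mem_cons_of_mem b hx)
      have hcp : (1:ℤ) ≤ (cc (c :: l')).1 := cp_pos _ h'
      have hne' : ((cc (c :: l')).1 : ℚ) ≠ 0 := by exact_mod_cast (by omega : (cc (c::l')).1 ≠ 0)
      have : hj ((b :: c :: l').map (fun b => (b : ℚ)))
          = (b : ℚ) - 1 / hj ((c :: l').map (fun b => (b : ℚ))) := rfl
      rw [this, ih (by simp) h']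
      simp only [cc_cons]
      rw [one_div_div]
      simp only [cc_cons] at hne'
      push_cast at hne' ⊢
      rw [eq_div_iff hne', sub_mul, div_mul_cancel₀ _ hne']

lemma bd_steps (j : ℕ) (L : List ℤ) (x c : ℤ) :
    Relation.ReflTransGen Bdown (L ++ [x] ++ List.replicate j 2 ++ [1, c])
      (L ++ [x - 1, c - j - 1]) := by
  induction j generalizing c with
  | zero =>
    apply Relation.ReflTransGen.single
    have h := Bdown.mk L x c []
    simp only [List.append_nil] at h
    have e1 : L ++ [x] ++ List.replicate 0 2 ++ [1, c] = L ++ [x, 1, c] := by simp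
    have e2 : L ++ [x - 1, c - (0:ℕ) - 1] = L ++ [x - 1, c - 1] := by norm_num
    rw [e1, e2]; exact h
  | succ j ih =>
    have h1 : Bdown (L ++ [x] ++ List.replicate (j+1) 2 ++ [1, c])
        (L ++ [x] ++ List.replicate j 2 ++ [1, c - 1]) := by
      have h := Bdown.mk (L ++ [x] ++ List.replicate j 2) 2 c []
      simp only [List.append_nil] at h
      have e1 : L ++ [x] ++ List.replicate (j+1) 2 ++ [1, c]
          = L ++ [x] ++ List.replicate j 2 ++ [2, 1, c] := by
        rw [List.replicate_succ']; simp [List.append_assoc]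
      have e2 : L ++ [x] ++ List.replicate j 2 ++ [1, c - 1]
          = L ++ [x] ++ List.replicate j 2 ++ [2 - 1, c - 1] := by norm_num
      rw [e1, e2]; exact h
    have h2 := ih (c - 1)
    have e3 : c - 1 - j - 1 = c - (j+1 : ℕ) - 1 := by push_cast; ring
    rw [e3] at h2
    exact Relation.ReflTransGen.head h1 h2

end Stmt6Aux

lemma final_arith (n a b1 mz N D r : ℤ) (hmz : 0 ≤ mz)
    (hN1 : n^2 = N + mz*(N - D)) (hkey : n*a + 1 = N - D)
    (hD2 : 2 ≤ D) (hN2 : 2*D + 1 ≤ N)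
    (hB : n^2 = b1*(n*a - 1) - r) (hr1 : 1 ≤ r) (hr2 : r ≤ n*a - 2)
    (ha1 : 1 ≤ a) (han : a < n) (hgcd : Int.gcd n a = 1) :
    b1 = mz + 2 := by
  have hg2 : 2 ≤ n*a := by linarith
  have hn2 : 2 ≤ n := by linarith
  have hA2 : n^2 = (mz+1)*(n*a+1) + D := by
    linear_combination hN1 - (mz+1) * hkey
  have hstep1 : mz + 2 ≤ b1 := by
    by_contra hcon
    push_neg at hcon
    have h1 : b1*(n*a-1) ≤ (mz+1)*(n*a-1) :=
      mul_le_mul_of_nonneg_right (by linarith) (by linarith)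
    have hdiff : (mz+1)*(n*a+1) - (mz+1)*(n*a-1) = 2*(mz+1) := by ring
    linarith
  have hstep2 : b1 ≤ mz + 2 := by
    by_contra hcon
    push_neg at hcon
    have h1 : (mz+2)*(n*a-1) ≤ (b1-1)*(n*a-1) :=
      mul_le_mul_of_nonneg_right (by linarith) (by linarith)
    have h2 : (b1-1)*(n*a-1) < n^2 := by
      have hx : (b1-1)*(n*a-1) = b1*(n*a-1) - (n*a-1) := by ring
      linarith
    have hDg : D ≤ n*a := by linarith
    have h3 : n^2 < (mz+2)*(n*a+1) := by
      have hdiff : (mz+2)*(n*a+1) - (mz+1)*(n*a+1) = n*a+1 := by ring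
      linarith
    have hlow : (mz+2)*(n*a-1) < n^2 := lt_of_le_of_lt h1 h2
    have hs_eq : n * (n - (mz+2)*a) = n^2 - (mz+2)*(n*a) := by ring
    have hhigh2 : n^2 - (mz+2)*(n*a) < mz + 2 := by
      have hdiff : (mz+2)*(n*a+1) - (mz+2)*(n*a) = mz+2 := by ring
      linarith
    have hlow2 : -(mz+2) < n^2 - (mz+2)*(n*a) := by
      have hdiff : (mz+2)*(n*a) - (mz+2)*(n*a-1) = mz+2 := by ring
      linarith
    rcases eq_or_ne (n - (mz+2)*a) 0 with h0 | h0
    · have hne2 : n = a * (mz+2) := by linear_combination h0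
      have hadvd : a ∣ n := ⟨mz+2, hne2⟩
      have hag : (a:ℤ) ∣ ((Int.gcd n a : ℕ) : ℤ) := Int.dvd_coe_gcd hadvd dvd_rfl
      rw [hgcd] at hag
      have hale : a ≤ 1 := Int.le_of_dvd (by norm_num) (by exact_mod_cast hag)
      have ha_eq : a = 1 := le_antisymm hale ha1
      rw [ha_eq] at hne2
      have hmzn : mz = n - 2 := by linarith
      have hD1 : D = 1 := by
        have hexp : (mz+1)*(n*a+1) = n^2 - 1 := by
          rw [ha_eq, hmzn]; ring
        linarith
      linarith
    · have hnle : n ≤ mz + 1 := by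
        rcases h0.lt_or_gt with hs | hs
        · have hx : n * (n - (mz+2)*a) ≤ n * (-1) :=
            mul_le_mul_of_nonneg_left (by linarith) (by linarith)
          linarith [hs_eq]
        · have hx : n * 1 ≤ n * (n - (mz+2)*a) :=
            mul_le_mul_of_nonneg_left (by linarith) (by linarith)
          linarith [hs_eq]
      have hga : n ≤ n*a := by
        have := mul_le_mul_of_nonneg_left ha1 (show (0:ℤ) ≤ n by linarith)
        linarith
      have hbig : n*(n+1) ≤ (mz+1)*(n*a+1) :=
        mul_le_mul (by linarith) (by linarith) (by linarith) (by linarith)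
      have hxx : n*(n+1) = n^2 + n := by ring
      linarith
  linarith

open Stmt6Aux in
/-- For a class T₀ chain [b₁,…,b_t] with b_{k+1} ≥ 3 (0-based k ≥ 1) and all
later entries 2, and any c ≥ b₁, successive blow-downs of (-1)-entries
transform the chain (b₁,…,b_t,1,c) into (b₁,…,b_k, b_{k+1}-1, c-b₁+1). -/
theorem stmt_6 (l : List ℤ) (hT0 : IsClassT0 l) (k : ℕ)
    (hk1 : 1 ≤ k) (hk2 : k < l.length)
    (hbi : 3 ≤ l[k]!) (h2 : ∀ j, k < j → j < l.length → l[j]! = 2)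
    (c : ℤ) (hc : l[0]! ≤ c) :
    Relation.ReflTransGen Bdown (l ++ [1, c])
      (l.take k ++ [l[k]! - 1, c - l[0]! + 1]) := by
  obtain ⟨hall, n, a, ha1, han, hgcd, hhj⟩ := hT0
  have hlen2 : 2 ≤ l.length := by omega
  have hne : l ≠ [] := by
    intro h; rw [h] at hk2; simp at hk2
  have hn2 : 2 ≤ n := by omega
  -- index bookkeeping
  have h0len : 0 < l.length := by omega
  rw [getElem!_pos l k hk2] at hbi
  rw [getElem!_pos l k hk2, getElem!_pos l 0 h0len]
  set m : ℕ := l.length - k - 1 with hm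
  -- the tail consists of 2's
  have hdrop : l.drop (k+1) = List.replicate m 2 := by
    rw [List.eq_replicate_iff]
    constructor
    · simp [hm]; omega
    · intro x hx
      rw [List.mem_iff_getElem] at hx
      obtain ⟨i, hi, hxe⟩ := hx
      have hi' : k + 1 + i < l.length := by
        simp [List.length_drop] at hi; omega
      have := h2 (k+1+i) (by omega) hi'
      rw [getElem!_pos l _ hi'] at this
      rw [← hxe, List.getElem_drop]
      exact this
  have hsplit : l = l.take k ++ (l[k] :: List.replicate m 2) := by
    conv_lhs => rw [← List.take_append_drop k l]
    rw [List.drop_eq_getElem_cons hk2, hdrop]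
  set M : List ℤ := l.take k with hMdef
  have hMlen : M.length = k := by simp [hMdef]; omega
  have hMne : M ≠ [] := by
    intro h; rw [h] at hMlen; simp at hMlen; omega
  have hM2 : ∀ x ∈ M, 2 ≤ x := fun x hx => hall x (List.take_subset k l hx)
  have hMr2 : ∀ x ∈ M.reverse, 2 ≤ x := fun x hx => hM2 x (List.mem_reverse.mp hx)
  have hMrne : M.reverse ≠ [] := fun h => hMne (by simpa using congrArg List.reverse h)
  -- identify (cc l) with (n², na-1)
  have hl2 : ∀ x ∈ l, 2 ≤ x := hall
  have hcqpos : 1 ≤ (cc l).2 := cq_pos l hl2 hne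
  have hnapos : (1:ℤ) ≤ n*a - 1 := by nlinarith
  have hcross : (cc l).1 * (n*a - 1) = n^2 * (cc l).2 := by
    rw [hj_eq l hne hl2] at hhj
    have hq1 : ((cc l).2 : ℚ) ≠ 0 := by exact_mod_cast (by omega : (cc l).2 ≠ 0)
    have hq2 : ((n : ℚ) * (a : ℚ) - 1) ≠ 0 := by
      have : ((n*a - 1 : ℤ) : ℚ) ≠ 0 := by exact_mod_cast (by omega : n*a - 1 ≠ 0)
      push_cast at this; convert this using 1
    have h3 := (div_eq_div_iff hq1 hq2).mp hhj
    have h4 : ((cc l).1 : ℚ) * ((n:ℚ)*(a:ℚ) - 1) = (n:ℚ)^2 * ((cc l).2 : ℚ) := by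
      linarith [h3]
    exact_mod_cast h4
  have hcopn : IsCoprime (n:ℤ) (n*a - 1) := ⟨a, -1, by ring⟩
  have hcop2 : IsCoprime ((n:ℤ)^2) (n*a - 1) := hcopn.pow_left
  have hcp : (cc l).1 = n^2 := by
    have hd1 : (n:ℤ)^2 ∣ (cc l).1 * (n*a - 1) := ⟨(cc l).2, hcross⟩
    have hd2 : (n:ℤ)^2 ∣ (cc l).1 := hcop2.dvd_of_dvd_mul_right hd1
    have hd3 : (cc l).1 ∣ n^2 * (cc l).2 := ⟨n*a - 1, hcross.symm⟩
    have hd4 : (cc l).1 ∣ n^2 := (coprime l).dvd_of_dvd_mul_right hd3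
    exact Int.dvd_antisymm (by linarith [cp_pos l hl2]) (by positivity) hd4 hd2
  have hcq : (cc l).2 = n*a - 1 := by
    rw [hcp] at hcross
    have hn2ne : (n:ℤ)^2 ≠ 0 := by positivity
    exact (mul_left_cancel₀ hn2ne hcross).symm
  -- u := (dd l).1 equals n² - na - 1
  have hdet := det_rule l
  rw [hcp, hcq] at hdet
  have hbnd := bounds l hl2
  have hbnd' := bounds M.reverse hMr2
  have hu0 : 0 ≤ (dd l).1 := hbnd.2.2.1
  have hup : (dd l).1 < n^2 := by
    have h5 := hbnd.2.2.2.2.1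
    have h6 := hbnd.2.2.2.2.2
    rw [hcp, hcq] at h6
    linarith
  have hueq : (dd l).1 = n^2 - n*a - 1 := by
    have hdvd : (n:ℤ)^2 ∣ ((dd l).1 - (n^2 - n*a - 1)) * (n*a - 1) :=
      ⟨(dd l).2 - n*a + 1 + a^2, by linear_combination (-1 : ℤ) * hdet⟩
    have hdvd2 : (n:ℤ)^2 ∣ ((dd l).1 - (n^2 - n*a - 1)) :=
      hcop2.dvd_of_dvd_mul_right hdvd
    have hna : n*a ≤ n*(n-1) := mul_le_mul_of_nonneg_left (by linarith) (by linarith)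
    have hnn : n*(n-1) = n^2 - n := by ring
    have hx1 : (1:ℤ) ≤ n^2 - n*a - 1 := by linarith
    have hx2 : (0:ℤ) < n*a + 1 := by
      have := mul_pos (show (0:ℤ) < n by linarith) (show (0:ℤ) < a by linarith)
      linarith
    have habs : |(dd l).1 - (n^2 - n*a - 1)| < n^2 := by
      rw [abs_lt]; exact ⟨by linarith, by linarith⟩
    have hz := Int.eq_zero_of_abs_lt_dvd hdvd2 habs
    linarith
  -- structural computation via the reversed list
  have hrev : l.reverse = List.replicate m 2 ++ (l[k] :: M.reverse) := by
    conv_lhs => rw [hsplit]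
    rw [List.reverse_append, List.reverse_cons, List.reverse_replicate]
    simp
  set s : List ℤ := l[k] :: M.reverse with hsdef
  have hrr := reverse_rule l
  have hrepl := replicate_rule m s
  rw [← hrev] at hrepl
  have hN1 : n^2 = (cc s).1 + (m:ℤ) * ((cc s).1 - (cc s).2) := by
    rw [← hcp, ← hrr.1]; exact hrepl.1
  have hu1 : n^2 - n*a - 1 = (cc s).2 + (m:ℤ) * ((cc s).1 - (cc s).2) := by
    rw [← hueq, ← hrr.2.1]; exact hrepl.2
  have hkey : n*a + 1 = (cc s).1 - (cc s).2 := by linarith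
  -- bounds on N and D
  have hD2 : 2 ≤ (cc s).2 := by
    have := cp_ge_two M.reverse hMr2 hMrne
    simpa [hsdef] using this
  have hs2 : ∀ x ∈ s, 2 ≤ x := by
    intro x hx
    rcases List.mem_cons.mp hx with h | h
    · subst h; exact hall _ (l.getElem_mem hk2)
    · exact hMr2 x h
  have hN2 : 2 * (cc s).2 + 1 ≤ (cc s).1 := by
    have hq' : (cc M.reverse).2 < (cc M.reverse).1 := hbnd'.2.1
    have hq0 : 0 ≤ (cc M.reverse).2 := hbnd'.1
    have : (cc s).1 = l[k] * (cc M.reverse).1 - (cc M.reverse).2 := by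
      rw [hsdef]; simp
    have hD : (cc s).2 = (cc M.reverse).1 := by rw [hsdef]; simp
    rw [this, hD]
    have hp1 : (1:ℤ) ≤ (cc M.reverse).1 := cp_pos M.reverse hMr2
    have h3 : 3 * (cc M.reverse).1 ≤ l[k] * (cc M.reverse).1 :=
      mul_le_mul_of_nonneg_right hbi (by linarith)
    linarith
  -- first entry
  have hlcons : l = l[0] :: l.drop 1 := by
    have h := List.drop_eq_getElem_cons (l := l) h0len
    rw [List.drop_zero] at h
    exact h
  set rest : List ℤ := l.drop 1 with hrest
  have hrestne : rest ≠ [] := by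
    intro h
    have : rest.length = 0 := by rw [h]; rfl
    rw [hrest] at this
    simp [List.length_drop] at this
    omega
  have hrest2 : ∀ x ∈ rest, 2 ≤ x := fun x hx => hall x (List.drop_subset 1 l hx)
  have hccl : cc l = cc (l[0] :: rest) := by rw [← hlcons]
  have hr1 : n^2 = l[0] * (cc rest).1 - (cc rest).2 := by
    rw [← hcp, hccl]; simp
  have hr2 : (cc rest).1 = n*a - 1 := by
    rw [← hcq, hccl]; simp
  have hrq1 : 1 ≤ (cc rest).2 := cq_pos rest hrest2 hrestne
  have hrq2 : (cc rest).2 ≤ n*a - 2 := by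
    have := (bounds rest hrest2).2.1
    rw [hr2] at this
    linarith
  have hB : n^2 = l[0] * (n*a - 1) - (cc rest).2 := by rw [← hr2]; exact hr1
  -- conclude the value of the first entry
  have hb1 : l[0] = (m:ℤ) + 2 :=
    final_arith n a l[0] (m:ℤ) (cc s).1 (cc s).2 (cc rest).2 (by positivity)
      hN1 hkey hD2 hN2 hB hrq1 hrq2 ha1 han hgcd
  -- assemble the blow-down sequence
  have hfinal := bd_steps m M l[k] c
  have hsrc : M ++ [l[k]] ++ List.replicate m 2 ++ [1, c] = l ++ [1, c] := by
    conv_rhs => rw [hsplit]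
    simp [List.append_assoc]
  have htgt : M ++ [l[k] - 1, c - (m:ℤ) - 1] = l.take k ++ [l[k] - 1, c - l[0] + 1] := by
    have hce : c - l[0] + 1 = c - (m:ℤ) - 1 := by rw [hb1]; ring
    rw [hce, hMdef]
  rw [hsrc, htgt] at hfinal
  exact hfinal
end

section
/- Let (b_1,…,b_t) be a chain of class T_0 generated from [4], and suppose b_j = 2 for all j > i with b_i ≥ 3 and i ≥ 2 (so b_1 = t − i + 2). Then the chain obtained by the generating operations from the shortened data, namely (b_1 − (t−i), b_2, …, b_{i−1}, b_i), that is (2, b_2, …, b_i), is again a chain of class T_0. -/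
/-!
Induct on the generation of the chain. The last operation cannot be `L` when the chain ends
in a `2`, since `L` makes the last entry at least `3`; so either there are no trailing `2`s and
there is nothing to do, or the last operation is `R`, which appended one trailing `2` and raised
`b₁` by one. Undoing it reduces to the shorter chain.
-/

theorem GenT0.two_le {l : List ℤ} (h : GenT0 l) : ∀ x ∈ l, 2 ≤ x := by
  induction h with
  | base => simp
  | left m hm _ ih =>
    have := ih _ (List.getLast_mem hm)
    simp only [List.mem_cons, List.mem_append, List.not_mem_nil, or_false]
    rintro x (rfl | hx | rfl)
    · rfl
    · exact ih x (List.mem_of_mem_dropLast hx)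
    · omega
  | right m hm _ ih =>
    have := ih _ (List.head_mem hm)
    simp only [List.mem_cons, List.mem_append, List.not_mem_nil, or_false]
    rintro x (rfl | hx | rfl)
    · omega
    · exact ih x (List.mem_of_mem_tail hx)
    · rfl

theorem GenT0.sub_of_cons_append_replicate {a b : ℤ} {u : List ℤ} {n : ℕ}
    (h : GenT0 (a :: (u ++ b :: List.replicate n 2))) (hb : 3 ≤ b) :
    GenT0 ((a - n) :: (u ++ [b])) := by
  generalize hl : a :: (u ++ b :: List.replicate n 2) = l at h
  induction h generalizing a u n with
  | base => simp at hl
  | left m hm hg =>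
    obtain ⟨rfl, hu⟩ := List.cons_eq_cons.mp hl
    cases n with
    | zero =>
      simp only [List.replicate_zero, Nat.cast_zero, sub_zero] at hu ⊢
      rw [hu]
      exact hg.left m hm
    | succ n =>
      rw [List.replicate_succ', ← List.cons_append, ← List.append_assoc] at hu
      have hlast := List.append_inj_right' hu rfl
      have := hg.two_le _ (List.getLast_mem hm)
      simp only [List.cons.injEq, and_true] at hlast
      omega
  | right m hm hg ih =>
    obtain ⟨c, w, rfl⟩ := List.exists_cons_of_ne_nil hm
    obtain ⟨rfl, hu⟩ := List.cons_eq_cons.mp hl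
    cases n with
    | zero =>
      have hlast := List.append_inj_right' hu rfl
      simp only [List.replicate_zero, List.cons.injEq, and_true] at hlast
      omega
    | succ n =>
      rw [List.replicate_succ', ← List.cons_append, ← List.append_assoc] at hu
      have hw := List.append_inj_left' hu rfl
      simp only [List.head_cons, List.tail_cons] at hw ⊢
      have hshort := ih (a := c) (n := n) (by rw [hw])
      push_cast
      convert hshort using 2
      ring

theorem List.eq_take_append_getElem!_cons_replicate {α : Type*} [Inhabited α] {l : List α}
    {k : ℕ} {c : α} (hk : k < l.length) (h : ∀ j, k < j → j < l.length → l[j]! = c) :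
    l = l.take k ++ l[k]! :: List.replicate (l.length - 1 - k) c := by
  have hdrop : l.drop (k + 1) = List.replicate (l.length - 1 - k) c := by
    refine List.eq_replicate_iff.mpr ⟨by simp only [List.length_drop]; omega, fun x hx => ?_⟩
    obtain ⟨i, hi, rfl⟩ := List.getElem_of_mem hx
    rw [List.getElem_drop, ← getElem!_pos]
    exact h _ (by omega) (by simp only [List.length_drop] at hi; omega)
  rw [← hdrop, getElem!_pos l k hk, ← List.drop_eq_getElem_cons hk, List.take_append_drop]

/-- Let (b₁,…,b_t) be a chain of class T₀ (generated from [4]) with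
b_{k+1} ≥ 3 (0-based k ≥ 1) and all later entries equal to 2. Then the chain
(b₁ - (t-1-k), b₂, …, b_{k+1}), i.e. (2, b₂, …, b_{k+1}), is again a chain of
class T₀. -/
theorem stmt_19 (l : List ℤ) (h : GenT0 l) (k : ℕ)
    (hk1 : 1 ≤ k) (hk2 : k < l.length)
    (hbi : 3 ≤ l[k]!) (h2 : ∀ j, k < j → j < l.length → l[j]! = 2) :
    GenT0 ((l[0]! - ((l.length - 1 - k : ℕ) : ℤ)) :: (l.tail.take k)) := by
  obtain ⟨x, t, rfl⟩ := List.exists_cons_of_length_pos (by omega : 0 < l.length)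
  obtain ⟨k, rfl⟩ := Nat.exists_eq_add_of_le' hk1
  simp only [List.length_cons, List.getElem!_cons_zero, List.getElem!_cons_succ, List.tail_cons] at *
  have ht := List.eq_take_append_getElem!_cons_replicate (c := 2) (by omega : k < t.length)
    fun j hj hjt => by simpa using h2 (j + 1) (by omega) (by omega)
  rw [ht] at h
  have hshort := h.sub_of_cons_append_replicate hbi
  rw [List.take_add_one, List.getElem?_eq_getElem (by omega), ← getElem!_pos, Option.toList_some]
  convert hshort using 4
  omega
end
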